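/- arXiv:1112.2679 — 2 statements merged into one kernel-verified Lean document; each statement's English description precedes it below -/
import Mathlib

section
/- Let F be an index set with supp(x̄) ⊆ F and |F| = s. Then the eigenvalues λ_1(A_F) ≥ λ_2(A_F) ≥ … of the principal submatrix A_F satisfy: λ_1(A_F) ≥ λ - ρ(E,s), and |λ_j(A_F)| ≤ λ - Δλ + ρ(E,s) for every j ≥ 2. -/
/-!
Extending vectors on `F` by zero turns the quadratic form of `A_F` into that of `Ā` plus that of
`E_F`, and the latter is bounded by `ρ(E,s)` on unit vectors. Since `supp x̄ ⊆ F`, the Rayleigh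
quotient of `A_F` at the restriction of `x̄` is at least `λ - ρ(E,s)`, which bounds `λ₁(A_F)`.
For a later eigenvalue `r = λ_j(A_F)`, the plane spanned by the eigenvectors of `λ₁(A_F)` and
`λ_j(A_F)` contains a unit vector orthogonal to `x̄`, on which the form of `Ā` is at most
`λ - Δλ`; hence `r ≤ λ - Δλ + ρ(E,s)`. All eigenvalues of `Ā` are at least `-(λ - Δλ)`, which
gives the lower bound `r ≥ -(λ - Δλ) - ρ(E,s)`.
-/

namespace TPaper

noncomputable def nrm2 {p : ℕ} (x : Fin p → ℝ) : ℝ := Real.sqrt (∑ i, x i ^ 2)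

def dotp {p : ℕ} (x y : Fin p → ℝ) : ℝ := ∑ i, x i * y i

noncomputable def supp {p : ℕ} (x : Fin p → ℝ) : Finset (Fin p) :=
  Finset.univ.filter fun i => x i ≠ 0

def subm {p : ℕ} (A : Matrix (Fin p) (Fin p) ℝ) (F : Finset (Fin p)) :
    Matrix {i // i ∈ F} {i // i ∈ F} ℝ :=
  A.submatrix Subtype.val Subtype.val

noncomputable def specNorm {n : Type*} [Fintype n] [DecidableEq n]
    (B : Matrix n n ℝ) : ℝ :=
  sSup {r : ℝ | ∃ μ ∈ spectrum ℝ B, r = |μ|}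

noncomputable def rhoRes {p : ℕ} (E : Matrix (Fin p) (Fin p) ℝ) (s : ℕ) : ℝ :=
  sSup {r : ℝ | ∃ F : Finset (Fin p), F.card = s ∧ r = specNorm (subm E F)}

def Trunc {p : ℕ} (x : Fin p → ℝ) (F : Finset (Fin p)) : Fin p → ℝ :=
  fun i => if i ∈ F then x i else 0

def IsTopK {p : ℕ} (y : Fin p → ℝ) (k : ℕ) (F : Finset (Fin p)) : Prop :=
  F.card = k ∧ ∀ i ∈ F, ∀ j ∉ F, |y j| ≤ |y i|

noncomputable def maxEig {n : Type*} [Fintype n] [DecidableEq n]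
    (B : Matrix n n ℝ) : ℝ :=
  sSup (spectrum ℝ B)

noncomputable def eigList {n : Type*} [Fintype n] [DecidableEq n] {B : Matrix n n ℝ}
    (hB : B.IsHermitian) : List ℝ :=
  ((Finset.univ.val.map hB.eigenvalues).sort (· ≤ ·)).reverse

end TPaper

open Matrix

theorem exists_unit_orthogonal_pair (α β : ℝ) :
    ∃ a c : ℝ, a ^ 2 + c ^ 2 = 1 ∧ a * α + c * β = 0 := by
  by_cases h : α ^ 2 + β ^ 2 = 0
  · refine ⟨1, 0, by norm_num, ?_⟩
    nlinarith [sq_nonneg α, sq_nonneg β]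
  · have hr : 0 < √(α ^ 2 + β ^ 2) := Real.sqrt_pos.mpr (by positivity)
    refine ⟨-β / √(α ^ 2 + β ^ 2), α / √(α ^ 2 + β ^ 2), ?_, by field_simp; ring⟩
    rw [div_pow, div_pow, Real.sq_sqrt (by positivity), neg_sq, ← add_div, add_comm, div_self h]

namespace Function.Injective

variable {m n R : Type*} {f : m → n}

section Semiring

variable [Fintype m] [Fintype n] [NonUnitalNonAssocSemiring R]

theorem extend_zero_dotProduct (hf : f.Injective) (x : m → R) (z : n → R) :
    extend f x 0 ⬝ᵥ z = x ⬝ᵥ (z ∘ f) :=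
  (Fintype.sum_of_injective f hf _ _
    (fun b hb => by rw [extend_apply' _ _ _ (by simpa using hb)]; simp)
    (fun a => by rw [hf.extend_apply]; rfl)).symm

theorem dotProduct_extend_zero (hf : f.Injective) (z : n → R) (x : m → R) :
    z ⬝ᵥ extend f x 0 = (z ∘ f) ⬝ᵥ x :=
  (Fintype.sum_of_injective f hf _ _
    (fun b hb => by rw [extend_apply' _ _ _ (by simpa using hb)]; simp)
    (fun a => by rw [hf.extend_apply]; rfl)).symm

theorem extend_zero_dotProduct_extend_zero (hf : f.Injective) (x y : m → R) :
    extend f x 0 ⬝ᵥ extend f y 0 = x ⬝ᵥ y := by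
  rw [hf.extend_zero_dotProduct, Function.extend_comp hf]

theorem extend_zero_dotProduct_mulVec (hf : f.Injective) (M : Matrix n n R) (x y : m → R) :
    extend f x 0 ⬝ᵥ M *ᵥ extend f y 0 = x ⬝ᵥ M.submatrix f f *ᵥ y := by
  rw [hf.extend_zero_dotProduct]
  congr 1
  funext i
  exact hf.dotProduct_extend_zero (M (f i)) y

theorem dotProduct_submatrix_add_mulVec (hf : f.Injective) (A E : Matrix n n R) (w : m → R) :
    w ⬝ᵥ (A + E).submatrix f f *ᵥ w =
      extend f w 0 ⬝ᵥ A *ᵥ extend f w 0 + w ⬝ᵥ E.submatrix f f *ᵥ w := by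
  rw [hf.extend_zero_dotProduct_mulVec, ← dotProduct_add, ← add_mulVec]
  rfl

end Semiring

theorem extend_zero_comp_eq [Zero R] (hf : f.Injective) {z : n → R}
    (hz : ∀ b ∉ Set.range f, z b = 0) : extend f (z ∘ f) 0 = z := by
  funext b
  by_cases hb : b ∈ Set.range f
  · obtain ⟨a, rfl⟩ := hb
    exact hf.extend_apply _ _ a
  · rw [extend_apply' _ _ _ (by simpa using hb), hz b hb, Pi.zero_apply]

end Function.Injective

namespace Matrix.IsHermitian

variable {n : Type*} [Fintype n] [DecidableEq n] {B : Matrix n n ℝ} (hB : B.IsHermitian)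

noncomputable def eigenCoord (x : n → ℝ) (i : n) : ℝ := ⇑(hB.eigenvectorBasis i) ⬝ᵥ x

theorem dotProduct_eigenvectorBasis (i j : n) :
    ⇑(hB.eigenvectorBasis i) ⬝ᵥ ⇑(hB.eigenvectorBasis j) = if i = j then 1 else 0 := by
  rw [← orthonormal_iff_ite.mp hB.eigenvectorBasis.orthonormal i j,
    EuclideanSpace.inner_eq_star_dotProduct, star_trivial, dotProduct_comm]

theorem eigenCoord_eq_repr (x : n → ℝ) (i : n) :
    hB.eigenCoord x i = hB.eigenvectorBasis.repr (WithLp.toLp 2 x) i := by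
  rw [OrthonormalBasis.repr_apply_apply, EuclideanSpace.inner_eq_star_dotProduct, star_trivial,
    dotProduct_comm, eigenCoord]

theorem dotProduct_eq_sum_eigenCoord (x y : n → ℝ) :
    x ⬝ᵥ y = ∑ i, hB.eigenCoord x i * hB.eigenCoord y i := by
  have := hB.eigenvectorBasis.repr.inner_map_map (WithLp.toLp 2 y) (WithLp.toLp 2 x)
  simp only [EuclideanSpace.inner_eq_star_dotProduct, star_trivial] at this
  simp only [eigenCoord_eq_repr]
  exact this.symm

theorem eigenCoord_mulVec (x : n → ℝ) (i : n) :
    hB.eigenCoord (B *ᵥ x) i = hB.eigenvalues i * hB.eigenCoord x i := by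
  rw [eigenCoord, eigenCoord, dotProduct_mulVec, ← mulVec_transpose,
    (isHermitian_iff_isSymm.mp hB).eq, mulVec_eigenvectorBasis, smul_dotProduct, smul_eq_mul]

theorem dotProduct_mulVec_self_eq (x : n → ℝ) :
    x ⬝ᵥ B *ᵥ x = ∑ i, hB.eigenvalues i * hB.eigenCoord x i ^ 2 := by
  simp only [hB.dotProduct_eq_sum_eigenCoord x, eigenCoord_mulVec]
  exact Finset.sum_congr rfl fun i _ => by ring

theorem dotProduct_self_eq (x : n → ℝ) : x ⬝ᵥ x = ∑ i, hB.eigenCoord x i ^ 2 := by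
  simp only [hB.dotProduct_eq_sum_eigenCoord x, sq]

theorem dotProduct_mulVec_self_le {M : ℝ} (hM : ∀ i, hB.eigenvalues i ≤ M) (x : n → ℝ) :
    x ⬝ᵥ B *ᵥ x ≤ M * (x ⬝ᵥ x) := by
  rw [hB.dotProduct_mulVec_self_eq, hB.dotProduct_self_eq, Finset.mul_sum]
  gcongr with i
  exact hM i

theorem le_dotProduct_mulVec_self {m : ℝ} (hm : ∀ i, m ≤ hB.eigenvalues i) (x : n → ℝ) :
    m * (x ⬝ᵥ x) ≤ x ⬝ᵥ B *ᵥ x := by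
  rw [hB.dotProduct_mulVec_self_eq, hB.dotProduct_self_eq, Finset.mul_sum]
  gcongr with i
  exact hm i

theorem eigenvalues_eq_dotProduct_mulVec (i : n) :
    hB.eigenvalues i = ⇑(hB.eigenvectorBasis i) ⬝ᵥ B *ᵥ ⇑(hB.eigenvectorBasis i) := by
  simpa using hB.eigenvalues_eq i

theorem exists_unit_orthogonal_min_eigenvalues_le {i j : n} (hij : i ≠ j) (v : n → ℝ) :
    ∃ w : n → ℝ, w ⬝ᵥ w = 1 ∧ w ⬝ᵥ v = 0 ∧
      min (hB.eigenvalues i) (hB.eigenvalues j) ≤ w ⬝ᵥ B *ᵥ w := by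
  set u := ⇑(hB.eigenvectorBasis i)
  set u' := ⇑(hB.eigenvectorBasis j)
  have huu : u ⬝ᵥ u = 1 := (hB.dotProduct_eigenvectorBasis i i).trans (if_pos rfl)
  have huu' : u ⬝ᵥ u' = 0 := (hB.dotProduct_eigenvectorBasis i j).trans (if_neg hij)
  have hu'u : u' ⬝ᵥ u = 0 := (hB.dotProduct_eigenvectorBasis j i).trans (if_neg hij.symm)
  have hu'u' : u' ⬝ᵥ u' = 1 := (hB.dotProduct_eigenvectorBasis j j).trans (if_pos rfl)
  obtain ⟨a, c, hac, hv⟩ := exists_unit_orthogonal_pair (u ⬝ᵥ v) (u' ⬝ᵥ v)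
  refine ⟨a • u + c • u', ?_, ?_, ?_⟩
  · simp only [add_dotProduct, dotProduct_add, smul_dotProduct, dotProduct_smul, smul_eq_mul,
      huu, huu', hu'u, hu'u']
    linear_combination hac
  · simpa only [add_dotProduct, smul_dotProduct, smul_eq_mul] using hv
  · have hBu : B *ᵥ u = hB.eigenvalues i • u := hB.mulVec_eigenvectorBasis i
    have hBu' : B *ᵥ u' = hB.eigenvalues j • u' := hB.mulVec_eigenvectorBasis j
    simp only [mulVec_add, mulVec_smul, hBu, hBu', add_dotProduct, dotProduct_add,
      smul_dotProduct, dotProduct_smul, smul_eq_mul, huu, huu', hu'u, hu'u']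
    have hi := mul_le_mul_of_nonneg_right (min_le_left (hB.eigenvalues i) (hB.eigenvalues j))
      (sq_nonneg a)
    have hj := mul_le_mul_of_nonneg_right (min_le_right (hB.eigenvalues i) (hB.eigenvalues j))
      (sq_nonneg c)
    linear_combination hi + hj - min (hB.eigenvalues i) (hB.eigenvalues j) * hac

theorem dotProduct_mulVec_self_le_of_dotProduct_eq_zero {lam M : ℝ} {i₀ : n} {x y : n → ℝ}
    (hx : B *ᵥ x = lam • x) (hx₀ : x ≠ 0) (hM : ∀ j ≠ i₀, hB.eigenvalues j ≤ M)
    (hMlam : M < lam) (hy : y ⬝ᵥ x = 0) : y ⬝ᵥ B *ᵥ y ≤ M * (y ⬝ᵥ y) := by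
  have hx_off : ∀ j ≠ i₀, hB.eigenCoord x j = 0 := by
    intro j hj
    have h := hB.eigenCoord_mulVec x j
    rw [hx, eigenCoord, dotProduct_smul, smul_eq_mul, ← eigenCoord] at h
    have hne : lam - hB.eigenvalues j ≠ 0 := by linarith [hM j hj]
    have hmul : (lam - hB.eigenvalues j) * hB.eigenCoord x j = 0 := by linear_combination h
    exact (mul_eq_zero.mp hmul).resolve_left hne
  have hx_i₀ : hB.eigenCoord x i₀ ≠ 0 := by
    intro h
    apply hx₀
    rw [← dotProduct_self_eq_zero, hB.dotProduct_self_eq]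
    refine Finset.sum_eq_zero fun j _ => ?_
    rcases eq_or_ne j i₀ with rfl | hj
    · simp [h]
    · simp [hx_off j hj]
  have hy_i₀ : hB.eigenCoord y i₀ = 0 := by
    rw [hB.dotProduct_eq_sum_eigenCoord, Finset.sum_eq_single i₀ (fun j _ hj => by
      rw [hx_off j hj, mul_zero]) (by simp)] at hy
    exact (mul_eq_zero.mp hy).resolve_right hx_i₀
  rw [hB.dotProduct_mulVec_self_eq, hB.dotProduct_self_eq, Finset.mul_sum]
  refine Finset.sum_le_sum fun j _ => ?_
  rcases eq_or_ne j i₀ with rfl | hj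
  · simp [hy_i₀]
  · exact mul_le_mul_of_nonneg_right (hM j hj) (sq_nonneg _)

end Matrix.IsHermitian

namespace TPaper

section Spectral

variable {n : Type*} [Fintype n] [DecidableEq n] {B : Matrix n n ℝ}

theorem abs_eigenvalues_le_specNorm (hB : B.IsHermitian) (i : n) :
    |hB.eigenvalues i| ≤ specNorm B := by
  refine le_csSup ?_ ⟨_, hB.eigenvalues_mem_spectrum_real i, rfl⟩
  refine ((B.finite_real_spectrum).image abs).bddAbove.mono ?_
  rintro _ ⟨μ, hμ, rfl⟩
  exact ⟨μ, hμ, rfl⟩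

theorem abs_dotProduct_mulVec_self_le_specNorm (hB : B.IsHermitian) (x : n → ℝ) :
    |x ⬝ᵥ B *ᵥ x| ≤ specNorm B * (x ⬝ᵥ x) := by
  have hlow := hB.le_dotProduct_mulVec_self
    (fun i => neg_le_of_abs_le (abs_eigenvalues_le_specNorm hB i)) x
  have hup := hB.dotProduct_mulVec_self_le
    (fun i => (le_abs_self _).trans (abs_eigenvalues_le_specNorm hB i)) x
  exact abs_le.mpr ⟨by linarith, hup⟩

theorem mem_eigList (hB : B.IsHermitian) {r : ℝ} :
    r ∈ eigList hB ↔ ∃ i, hB.eigenvalues i = r := by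
  simp [eigList]

theorem eigenvalues_le_headI_eigList (hB : B.IsHermitian) (i : n) :
    hB.eigenvalues i ≤ (eigList hB).headI := by
  have hmem : hB.eigenvalues i ∈ eigList hB := (mem_eigList hB).mpr ⟨i, rfl⟩
  have hsorted : (eigList hB).Pairwise (fun a b => b ≤ a) :=
    List.pairwise_reverse.mpr (Multiset.pairwise_sort _ _)
  obtain ⟨a, t, ht⟩ := List.exists_cons_of_ne_nil (List.ne_nil_of_mem hmem)
  rw [ht] at hmem hsorted ⊢
  rcases List.mem_cons.mp hmem with h | h
  · exact h.le
  · exact (List.pairwise_cons.mp hsorted).1 _ h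

theorem exists_ne_of_mem_tail_eigList (hB : B.IsHermitian) {r : ℝ}
    (hr : r ∈ (eigList hB).tail) :
    ∃ i j, i ≠ j ∧ hB.eigenvalues i = (eigList hB).headI ∧ hB.eigenvalues j = r := by
  obtain ⟨a, t, ht⟩ := List.exists_cons_of_ne_nil (List.ne_nil_of_mem (List.mem_of_mem_tail hr))
  have hcons : Multiset.map hB.eigenvalues Finset.univ.val = a ::ₘ (t : Multiset ℝ) := by
    rw [Multiset.cons_coe, ← ht, eigList, Multiset.coe_reverse, Multiset.sort_eq]
  obtain ⟨i, -, hi, hmap⟩ := (Multiset.map_eq_cons _ _ _ _).mpr hcons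
  have hr' : r ∈ Multiset.map hB.eigenvalues (Finset.univ.val.erase i) := by
    rw [hmap]; simpa [ht] using hr
  obtain ⟨j, hj_mem, hj⟩ := Multiset.mem_map.mp hr'
  rw [ht]
  refine ⟨i, j, fun hij => ?_, hi, hj⟩
  exact Finset.univ.nodup.notMem_erase (hij ▸ hj_mem)

end Spectral

theorem specNorm_subm_le_rhoRes {p : ℕ} (E : Matrix (Fin p) (Fin p) ℝ) {F : Finset (Fin p)}
    {s : ℕ} (hF : F.card = s) : specNorm (subm E F) ≤ rhoRes E s := by
  refine le_csSup ?_ ⟨F, hF, rfl⟩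
  refine (Set.finite_range fun F : Finset (Fin p) => specNorm (subm E F)).bddAbove.mono ?_
  rintro _ ⟨F', -, rfl⟩
  exact ⟨F', rfl⟩

section RestrictedPerturbation

variable {m n : Type*} [Fintype m] [Fintype n] [DecidableEq m] {A E : Matrix n n ℝ} {f : m → n}
  {ρ : ℝ}

theorem sub_le_headI_eigList_of_eigenvector (hf : f.Injective)
    (hB : ((A + E).submatrix f f).IsHermitian)
    (hE : ∀ w, |w ⬝ᵥ E.submatrix f f *ᵥ w| ≤ ρ * (w ⬝ᵥ w)) {lam : ℝ} {x : n → ℝ}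
    (hx : A *ᵥ x = lam • x) (hx_unit : x ⬝ᵥ x = 1) (hx_supp : ∀ b ∉ Set.range f, x b = 0) :
    lam - ρ ≤ (eigList hB).headI := by
  have hext : Function.extend f (x ∘ f) 0 = x := hf.extend_zero_comp_eq hx_supp
  have hxf_unit : (x ∘ f) ⬝ᵥ (x ∘ f) = 1 := by
    rw [← hf.extend_zero_dotProduct_extend_zero, hext, hx_unit]
  have hmax := hB.dotProduct_mulVec_self_le (eigenvalues_le_headI_eigList hB) (x ∘ f)
  have hEx := hE (x ∘ f)
  rw [hf.dotProduct_submatrix_add_mulVec, hext, hx, dotProduct_smul, hx_unit, smul_eq_mul,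
    hxf_unit] at hmax
  rw [hxf_unit] at hEx
  linarith [(abs_le.mp hEx).1]

theorem sub_le_eigenvalues_of_le_eigenvalues [DecidableEq n] (hA : A.IsHermitian)
    (hf : f.Injective) (hB : ((A + E).submatrix f f).IsHermitian)
    (hE : ∀ w, |w ⬝ᵥ E.submatrix f f *ᵥ w| ≤ ρ * (w ⬝ᵥ w)) {μ : ℝ}
    (hμ : ∀ k, μ ≤ hA.eigenvalues k) (j : m) : μ - ρ ≤ hB.eigenvalues j := by
  set u := ⇑(hB.eigenvectorBasis j)
  have hu_unit : u ⬝ᵥ u = 1 := (hB.dotProduct_eigenvectorBasis j j).trans (if_pos rfl)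
  have hAu := hA.le_dotProduct_mulVec_self hμ (Function.extend f u 0)
  have hEu := hE u
  rw [hf.extend_zero_dotProduct_extend_zero, hu_unit] at hAu
  rw [hu_unit] at hEu
  rw [hB.eigenvalues_eq_dotProduct_mulVec, hf.dotProduct_submatrix_add_mulVec]
  linarith [(abs_le.mp hEu).1]

theorem min_eigenvalues_le_add_of_gap [DecidableEq n] (hA : A.IsHermitian) (hf : f.Injective)
    (hB : ((A + E).submatrix f f).IsHermitian)
    (hE : ∀ w, |w ⬝ᵥ E.submatrix f f *ᵥ w| ≤ ρ * (w ⬝ᵥ w)) {lam M : ℝ} {i₀ : n} {x : n → ℝ}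
    (hx : A *ᵥ x = lam • x) (hx₀ : x ≠ 0) (hx_supp : ∀ b ∉ Set.range f, x b = 0)
    (hM : ∀ k ≠ i₀, hA.eigenvalues k ≤ M) (hMlam : M < lam) {i j : m} (hij : i ≠ j) :
    min (hB.eigenvalues i) (hB.eigenvalues j) ≤ M + ρ := by
  obtain ⟨w, hw_unit, hw_orth, hw_min⟩ := hB.exists_unit_orthogonal_min_eigenvalues_le hij (x ∘ f)
  have hAw := hA.dotProduct_mulVec_self_le_of_dotProduct_eq_zero hx hx₀ hM hMlam
    (y := Function.extend f w 0) (by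
      rw [← hf.extend_zero_comp_eq hx_supp, hf.extend_zero_dotProduct_extend_zero, hw_orth])
  have hEw := hE w
  rw [hf.extend_zero_dotProduct_extend_zero, hw_unit] at hAw
  rw [hw_unit] at hEw
  rw [hf.dotProduct_submatrix_add_mulVec] at hw_min
  linarith [(abs_le.mp hEw).2]

end RestrictedPerturbation

theorem statement4_general (p s : ℕ)
    (Abar E : Matrix (Fin p) (Fin p) ℝ)
    (hAbar : Abar.IsHermitian) (hE : E.IsHermitian)
    (lam dlam : ℝ) (i0 : Fin p)
    (hi0 : hAbar.eigenvalues i0 = lam)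
    (hdlam_pos : 0 < dlam)
    (hgap_le : ∀ j, j ≠ i0 → |hAbar.eigenvalues j| ≤ lam - dlam)
    (hgap_eq : ∃ j, j ≠ i0 ∧ |hAbar.eigenvalues j| = lam - dlam)
    (xbar : Fin p → ℝ)
    (hxbar_eig : Abar.mulVec xbar = lam • xbar)
    (hxbar_norm : nrm2 xbar = 1)
    (F : Finset (Fin p)) (hFsupp : supp xbar ⊆ F) (hFcard : F.card = s) :
    lam - rhoRes E s ≤ (eigList ((hAbar.add hE).submatrix (Subtype.val : {i // i ∈ F} → Fin p))).headI ∧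
      ∀ r ∈ (eigList ((hAbar.add hE).submatrix (Subtype.val : {i // i ∈ F} → Fin p))).tail,
        |r| ≤ lam - dlam + rhoRes E s := by
  set hB := (hAbar.add hE).submatrix (Subtype.val : {i // i ∈ F} → Fin p)
  have hval : Function.Injective (Subtype.val : {i // i ∈ F} → Fin p) := Subtype.val_injective
  have hEF (w : {i // i ∈ F} → ℝ) : |w ⬝ᵥ subm E F *ᵥ w| ≤ rhoRes E s * (w ⬝ᵥ w) :=
    (abs_dotProduct_mulVec_self_le_specNorm (hE.submatrix _) w).trans <|
      mul_le_mul_of_nonneg_right (specNorm_subm_le_rhoRes E hFcard)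
        (Fintype.sum_nonneg fun i => mul_self_nonneg (w i))
  have hxbar_unit : xbar ⬝ᵥ xbar = 1 := by
    rw [nrm2, Real.sqrt_eq_one] at hxbar_norm
    simpa [dotProduct, sq] using hxbar_norm
  have hxbar_vanish : ∀ k ∉ Set.range (Subtype.val : {i // i ∈ F} → Fin p), xbar k = 0 :=
    fun k hk => by_contra fun h => hk ⟨⟨k, hFsupp (by simpa [supp] using h)⟩, rfl⟩
  refine ⟨sub_le_headI_eigList_of_eigenvector hval hB hEF hxbar_eig hxbar_unit hxbar_vanish,
    fun r hr => ?_⟩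
  obtain ⟨i, j, hij, hi, rfl⟩ := exists_ne_of_mem_tail_eigList hB hr
  have hgap_nonneg : 0 ≤ lam - dlam := by
    obtain ⟨j, -, hj⟩ := hgap_eq
    exact hj ▸ abs_nonneg _
  have hAbar_ge (k : Fin p) : -(lam - dlam) ≤ hAbar.eigenvalues k := by
    rcases eq_or_ne k i0 with rfl | hk
    · linarith
    · exact neg_le_of_abs_le (hgap_le k hk)
  have hj_min : hB.eigenvalues j ≤ min (hB.eigenvalues i) (hB.eigenvalues j) :=
    le_min (hi ▸ eigenvalues_le_headI_eigList hB j) le_rfl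
  have hupper := min_eigenvalues_le_add_of_gap hAbar hval hB hEF hxbar_eig
    (fun h => by simp [h] at hxbar_unit) hxbar_vanish
    (fun k hk => (le_abs_self _).trans (hgap_le k hk)) (by linarith) hij
  have hlower := sub_le_eigenvalues_of_le_eigenvalues hAbar hval hB hEF hAbar_ge j
  exact abs_le.mpr ⟨by linarith, by linarith⟩

theorem statement4 (p kbar s : ℕ)
    (Abar E : Matrix (Fin p) (Fin p) ℝ)
    (hAbar : Abar.IsHermitian) (hE : E.IsHermitian)
    (lam dlam : ℝ) (i0 : Fin p)
    (hi0 : hAbar.eigenvalues i0 = lam)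
    (hlam_pos : 0 < lam) (hdlam_pos : 0 < dlam)
    (hgap_le : ∀ j, j ≠ i0 → |hAbar.eigenvalues j| ≤ lam - dlam)
    (hgap_eq : ∃ j, j ≠ i0 ∧ |hAbar.eigenvalues j| = lam - dlam)
    (xbar : Fin p → ℝ)
    (hxbar_eig : Abar.mulVec xbar = lam • xbar)
    (hxbar_norm : nrm2 xbar = 1)
    (hxbar_supp : (supp xbar).card = kbar)
    (F : Finset (Fin p)) (hFsupp : supp xbar ⊆ F) (hFcard : F.card = s) :
    lam - rhoRes E s ≤ (eigList ((hAbar.add hE).submatrix (Subtype.val : {i // i ∈ F} → Fin p))).headI ∧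
      ∀ r ∈ (eigList ((hAbar.add hE).submatrix (Subtype.val : {i // i ∈ F} → Fin p))).tail,
        |r| ≤ lam - dlam + rhoRes E s :=
  statement4_general p s Abar E hAbar hE lam dlam i0 hi0 hdlam_pos hgap_le hgap_eq xbar hxbar_eig
    hxbar_norm F hFsupp hFcard

end TPaper
end

section
/- One iteration of the TPower method does not decrease the objective when A is positive semidefinite: let A be a p×p real symmetric positive semidefinite matrix, let x be a unit vector with at most k nonzero entries such that Ax ≠ 0, let F be a top-k index set for Ax, let x̂ = Truncate(Ax, F), and assume x̂ ≠ 0. Then the normalized next iterate x⁺ = x̂/‖x̂‖ satisfies (x⁺)ᵀA x⁺ ≥ xᵀAx. -/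
open Finset Matrix

theorem Finset.sum_le_sum_of_card_le_of_forall_le {ι M : Type*} [DecidableEq ι]
    [AddCommMonoid M] [LinearOrder M] [IsOrderedAddMonoid M] {f : ι → M} {S F : Finset ι}
    (hf : ∀ i ∈ F, 0 ≤ f i) (hcard : #S ≤ #F) (hF : ∀ i ∈ F, ∀ j ∉ F, f j ≤ f i) :
    ∑ i ∈ S, f i ≤ ∑ i ∈ F, f i := by
  suffices h : ∑ i ∈ S \ F, f i ≤ ∑ i ∈ F \ S, f i by
    rw [← sum_inter_add_sum_sdiff S F, ← sum_inter_add_sum_sdiff F S, inter_comm]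
    exact add_le_add_right h _
  have hcard' : #(S \ F) ≤ #(F \ S) := card_sdiff_le_card_sdiff_iff.2 hcard
  rcases (S \ F).eq_empty_or_nonempty with hSF | hSF
  · rw [hSF, sum_empty]
    exact sum_nonneg fun i hi => hf i (mem_sdiff.1 hi).1
  have hFS : (F \ S).Nonempty := card_pos.1 (hSF.card_pos.trans_le hcard')
  set m := (F \ S).inf' hFS f
  calc ∑ i ∈ S \ F, f i ≤ #(S \ F) • m := sum_le_card_nsmul _ _ _ fun j hj =>
        le_inf' hFS f fun i hi => hF i (mem_sdiff.1 hi).1 j (mem_sdiff.1 hj).2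
    _ ≤ #(F \ S) • m :=
        nsmul_le_nsmul_left (le_inf' hFS f fun i hi => hf i (mem_sdiff.1 hi).1) hcard'
    _ ≤ ∑ i ∈ F \ S, f i := card_nsmul_le_sum _ _ _ fun i hi => inf'_le f hi

theorem Matrix.PosSemidef.dotProduct_mulVec_sq_le {n : Type*} [Fintype n] {A : Matrix n n ℝ}
    (hA : A.PosSemidef) (u v : n → ℝ) :
    (u ⬝ᵥ A *ᵥ v) ^ 2 ≤ (u ⬝ᵥ A *ᵥ u) * (v ⬝ᵥ A *ᵥ v) := by
  have h := @real_inner_mul_inner_self_le _ (A.toSeminormedAddCommGroup hA)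
    (A.toInnerProductSpace hA) u v
  change (A *ᵥ v) ⬝ᵥ u * ((A *ᵥ v) ⬝ᵥ u) ≤ (A *ᵥ u) ⬝ᵥ u * ((A *ᵥ v) ⬝ᵥ v) at h
  simpa only [dotProduct_comm (A *ᵥ _), sq] using h

theorem le_inv_sq_mul_of_sq_sq_le_mul {a n D : ℝ} (ha : 0 ≤ a) (han : a ≤ n)
    (h : (n ^ 2) ^ 2 ≤ D * a) : a ≤ n⁻¹ ^ 2 * D := by
  rcases (ha.trans han).eq_or_lt with hn | hn
  · -- `n = 0` forces `a = 0`, and `0⁻¹ = 0` makes the right side vanish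
    simpa [← hn] using han
  have ha' : 0 < a := by
    refine ha.lt_of_ne fun ha0 => ?_
    rw [← ha0, mul_zero] at h
    exact (pow_pos (pow_pos hn 2) 2).not_ge h
  rw [inv_pow, inv_mul_eq_div, le_div_iff₀ (by positivity)]
  nlinarith [mul_le_mul_of_nonneg_right (pow_le_pow_left₀ ha han 2) (sq_nonneg n)]

namespace TPaper

variable {p : ℕ}

theorem nrm2_sq (x : Fin p → ℝ) : nrm2 x ^ 2 = ∑ i, x i ^ 2 :=
  Real.sq_sqrt (sum_nonneg fun _ _ => sq_nonneg _)

theorem dotp_le_nrm2_mul_nrm2 (x y : Fin p → ℝ) : dotp x y ≤ nrm2 x * nrm2 y :=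
  Real.sum_mul_le_sqrt_mul_sqrt _ _ _

theorem sum_sq_trunc (y : Fin p → ℝ) (F : Finset (Fin p)) :
    ∑ i, Trunc y F i ^ 2 = ∑ i ∈ F, y i ^ 2 := by
  simp [Trunc, apply_ite (· ^ 2), sum_ite_mem]

theorem dotp_trunc_self (y : Fin p → ℝ) (F : Finset (Fin p)) :
    dotp (Trunc y F) y = nrm2 (Trunc y F) ^ 2 := by
  rw [nrm2_sq, sum_sq_trunc]
  simp [dotp, Trunc, ite_mul, sum_ite_mem, sq]

theorem dotp_trunc_supp (x y : Fin p → ℝ) : dotp x (Trunc y (supp x)) = dotp x y := by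
  refine sum_congr rfl fun i _ => ?_
  by_cases hi : x i = 0 <;> simp [Trunc, supp, hi]

theorem nrm2_trunc_le_of_isTopK {y : Fin p → ℝ} {S F : Finset (Fin p)} {k : ℕ} (hS : #S ≤ k)
    (hF : IsTopK y k F) : nrm2 (Trunc y S) ≤ nrm2 (Trunc y F) := by
  unfold nrm2
  rw [sum_sq_trunc, sum_sq_trunc]
  exact Real.sqrt_le_sqrt <| sum_le_sum_of_card_le_of_forall_le (fun _ _ => sq_nonneg _)
    (hF.1 ▸ hS) fun i hi j hj => sq_le_sq.2 (hF.2 i hi j hj)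

theorem dotp_le_nrm2_mul_nrm2_trunc_of_isTopK {x y : Fin p → ℝ} {F : Finset (Fin p)} {k : ℕ}
    (hx : #(supp x) ≤ k) (hF : IsTopK y k F) : dotp x y ≤ nrm2 x * nrm2 (Trunc y F) := by
  rw [← dotp_trunc_supp]
  exact (dotp_le_nrm2_mul_nrm2 _ _).trans <|
    mul_le_mul_of_nonneg_left (nrm2_trunc_le_of_isTopK hx hF) (Real.sqrt_nonneg _)

theorem dotp_smul_mulVec_smul (A : Matrix (Fin p) (Fin p) ℝ) (c : ℝ) (u : Fin p → ℝ) :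
    dotp (c • u) (A *ᵥ (c • u)) = c ^ 2 * dotp u (A *ᵥ u) := by
  change (c • u) ⬝ᵥ A *ᵥ (c • u) = c ^ 2 * (u ⬝ᵥ A *ᵥ u)
  rw [mulVec_smul, smul_dotProduct, dotProduct_smul, smul_eq_mul, smul_eq_mul]
  ring

theorem statement15_general (p k : ℕ)
    (A : Matrix (Fin p) (Fin p) ℝ) (hA : A.PosSemidef)
    (x : Fin p → ℝ) (hxn : nrm2 x = 1) (hxsupp : (supp x).card ≤ k)
    (F : Finset (Fin p)) (hF : IsTopK (A.mulVec x) k F)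
    (xhat : Fin p → ℝ) (hxhat : xhat = Trunc (A.mulVec x) F) :
    dotp x (A.mulVec x) ≤
      dotp ((nrm2 xhat)⁻¹ • xhat) (A.mulVec ((nrm2 xhat)⁻¹ • xhat)) := by
  have hxy : dotp x (A *ᵥ x) ≤ nrm2 xhat := by
    simpa [hxn, hxhat] using dotp_le_nrm2_mul_nrm2_trunc_of_isTopK hxsupp hF
  have hCS : (nrm2 xhat ^ 2) ^ 2 ≤ dotp xhat (A *ᵥ xhat) * dotp x (A *ᵥ x) := by
    rw [hxhat, ← dotp_trunc_self, ← hxhat]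
    exact hA.dotProduct_mulVec_sq_le xhat x
  rw [dotp_smul_mulVec_smul]
  have hxAx : 0 ≤ x ⬝ᵥ A *ᵥ x := by simpa using hA.dotProduct_mulVec_nonneg x
  exact le_inv_sq_mul_of_sq_sq_le_mul hxAx hxy hCS

theorem statement15 (p k : ℕ)
    (A : Matrix (Fin p) (Fin p) ℝ) (hA : A.PosSemidef)
    (x : Fin p → ℝ) (hxn : nrm2 x = 1) (hxsupp : (supp x).card ≤ k)
    (hAx : A.mulVec x ≠ 0)
    (F : Finset (Fin p)) (hF : IsTopK (A.mulVec x) k F)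
    (xhat : Fin p → ℝ) (hxhat : xhat = Trunc (A.mulVec x) F) (hxhat0 : xhat ≠ 0) :
    dotp x (A.mulVec x) ≤
      dotp ((nrm2 xhat)⁻¹ • xhat) (A.mulVec ((nrm2 xhat)⁻¹ • xhat)) :=
  statement15_general p k A hA x hxn hxsupp F hF xhat hxhat

end TPaper
end
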